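/- BPS equations in eight Euclidean dimensions (ν = 4/16): in Cl₈ let Γ* = Γ₁Γ₂⋯Γ₈ and Ω₁₂₃₄ = ¼(1 + Γ*)(1 + Γ₁₂₃₄). Then Ω₁₂₃₄ is an idempotent, and for every antisymmetric F : {1,…,8}² → ℝ one has X_F·Ω₁₂₃₄ = 0 if and only if: F₁₂ + F₄₃ = 0, F₁₃ + F₂₄ = 0, F₁₄ + F₃₂ = 0, F₅₆ + F₈₇ = 0, F₅₇ + F₆₈ = 0, F₅₈ + F₇₆ = 0, and F_{ab} = 0 for all a ∈ {1,2,3,4}, b ∈ {5,6,7,8}. -/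

import Mathlib

/-- The positive-definite quadratic form `Q(x) = x₁² + ⋯ + x_d²` on `ℝ^d`, `d = 8`. -/
noncomputable def Q8 : QuadraticForm ℝ (Fin 8 → ℝ) :=
  QuadraticMap.weightedSumSquares ℝ (fun _ : Fin 8 => (1 : ℝ))

/-- `Γ_a` (`a = 1,…,8`, indexed here by `Fin 8`): the image of the `a`-th
standard basis vector in `Cl_8`. -/
noncomputable def G8 (a : Fin 8) : CliffordAlgebra Q8 :=
  CliffordAlgebra.ι Q8 (Pi.single a 1)

/-- `X_F = ∑_{a,b} F_{ab} Γ_aΓ_b`. -/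
noncomputable def X8 (F : Fin 8 → Fin 8 → ℝ) : CliffordAlgebra Q8 :=
  ∑ a, ∑ b, F a b • (G8 a * G8 b)

/-- The chirality element `Γ* = Γ₁Γ₂⋯Γ₈` of `Cl₈`. -/
noncomputable def GStar8 : CliffordAlgebra Q8 :=
  G8 0 * G8 1 * G8 2 * G8 3 * G8 4 * G8 5 * G8 6 * G8 7

/-- The projector of the `ν = 4/16` BPS system in eight Euclidean dimensions:
`Ω₁₂₃₄ = ¼(1 + Γ*)(1 + Γ₁₂₃₄)`. -/
noncomputable def Omega8' : CliffordAlgebra Q8 :=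
  (1 / 4 : ℝ) • ((1 + GStar8) * (1 + G8 0 * G8 1 * G8 2 * G8 3))

/-! Γ* and Γ₁₂₃₄ are commuting involutions, so `Ω₁₂₃₄ = ½(1 + Γ*) · ½(1 + Γ₁₂₃₄)` is a
product of commuting idempotents.

Both Γ₁₂₃₄ and Γ₅₆₇₈ = Γ₁₂₃₄Γ* fix Ω₁₂₃₄ from the left, so for `a, b` in the same block of four,
`Γ_{ab}Ω₁₂₃₄ = ±Γ_{cd}Ω₁₂₃₄` for the complementary pair `{c, d}` of that block. This folds
`X_FΩ₁₂₃₄` into a combination of 22 elements `Γ_{ab}Ω₁₂₃₄` whose coefficients are the left-hand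
sides of the BPS equations. These 22 elements are linearly independent: the degree-six monomial
complementary to `{a, b}` occurs among them only in `Γ_{ab}Ω₁₂₃₄`, so contracting with the six
coordinate covectors off `{a, b}` isolates its coefficient. -/

open CliffordAlgebra

section Involution

variable {A : Type*} [Ring A] [Algebra ℝ A] {u : A}

theorem mul_half_smul_one_add_of_mul_self (hu : u * u = 1) :
    u * ((1 / 2 : ℝ) • (1 + u)) = (1 / 2 : ℝ) • (1 + u) := by
  rw [mul_smul_comm, mul_add, hu, mul_one, add_comm]

theorem isIdempotentElem_half_smul_one_add (hu : u * u = 1) :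
    IsIdempotentElem ((1 / 2 : ℝ) • (1 + u)) := by
  rw [IsIdempotentElem, smul_mul_smul]
  simp only [add_mul, mul_add, hu, one_mul, mul_one]
  module

end Involution

theorem Q8_single (a : Fin 8) : Q8 (Pi.single a 1) = 1 := by
  simp [Q8, QuadraticMap.weightedSumSquares_apply, Pi.single_apply]

@[simp]
theorem G8_mul_self (a : Fin 8) : G8 a * G8 a = 1 := by
  rw [G8, ι_sq_scalar, Q8_single, map_one]

@[simp]
theorem G8_mul_G8_of_lt {a b : Fin 8} (h : b < a) : G8 a * G8 b = -(G8 b * G8 a) := by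
  refine ι_mul_ι_comm_of_isOrtho ?_
  simp [QuadraticMap.IsOrtho, Q8, QuadraticMap.weightedSumSquares_apply, Pi.single_apply,
    mul_add, Finset.sum_add_distrib, h.ne, h.ne']

@[simp]
theorem G8_mul_G8_mul_self (a : Fin 8) (x : CliffordAlgebra Q8) : G8 a * (G8 a * x) = x := by
  rw [← mul_assoc, G8_mul_self, one_mul]

@[simp]
theorem G8_mul_G8_mul_of_lt {a b : Fin 8} (h : b < a) (x : CliffordAlgebra Q8) :
    G8 a * (G8 b * x) = -(G8 b * (G8 a * x)) := by
  rw [← mul_assoc, G8_mul_G8_of_lt h, neg_mul, mul_assoc]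

-- The paper's Γ₁₂₃₄ and Γ₅₆₇₈: indices start at 0 here.
local notation "Γ₀₁₂₃" => G8 0 * G8 1 * G8 2 * G8 3
local notation "Γ₄₅₆₇" => G8 4 * G8 5 * G8 6 * G8 7

theorem GStar8_mul_self : GStar8 * GStar8 = 1 := by
  simp [GStar8, mul_assoc]

theorem G0123_mul_self : Γ₀₁₂₃ * Γ₀₁₂₃ = 1 := by
  simp [mul_assoc]

theorem commute_GStar8_G0123 : Commute GStar8 Γ₀₁₂₃ := by
  simp [Commute, SemiconjBy, GStar8, mul_assoc]

theorem G0123_mul_GStar8 : Γ₀₁₂₃ * GStar8 = Γ₄₅₆₇ := by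
  simp [GStar8, mul_assoc]

theorem Omega8'_eq_mul :
    Omega8' = ((1 / 2 : ℝ) • (1 + GStar8)) * ((1 / 2 : ℝ) • (1 + Γ₀₁₂₃)) := by
  rw [Omega8', smul_mul_smul]
  norm_num

theorem Omega8'_eq_sum : Omega8' = (1 / 4 : ℝ) • (1 + Γ₀₁₂₃ + Γ₄₅₆₇ + GStar8) := by
  rw [Omega8', mul_add, add_mul, add_mul, one_mul, mul_one, one_mul, commute_GStar8_G0123.eq,
    G0123_mul_GStar8]
  abel_nf

theorem isIdempotentElem_Omega8' : IsIdempotentElem Omega8' := by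
  rw [Omega8'_eq_mul]
  refine IsIdempotentElem.mul_of_commute ?_ (isIdempotentElem_half_smul_one_add GStar8_mul_self)
    (isIdempotentElem_half_smul_one_add G0123_mul_self)
  exact (((Commute.one_left _).add_left
    ((Commute.one_right _).add_right commute_GStar8_G0123)).smul_left _).smul_right _

theorem GStar8_mul_Omega8' : GStar8 * Omega8' = Omega8' := by
  rw [Omega8'_eq_mul, ← mul_assoc, mul_half_smul_one_add_of_mul_self GStar8_mul_self]

theorem G0123_mul_Omega8' : Γ₀₁₂₃ * Omega8' = Omega8' := by
  have hc : Commute Γ₀₁₂₃ ((1 / 2 : ℝ) • (1 + GStar8)) :=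
    ((Commute.one_right _).add_right commute_GStar8_G0123.symm).smul_right _
  rw [Omega8'_eq_mul, ← mul_assoc, hc.eq, mul_assoc,
    mul_half_smul_one_add_of_mul_self G0123_mul_self]

theorem G4567_mul_Omega8' : Γ₄₅₆₇ * Omega8' = Omega8' := by
  rw [← G0123_mul_GStar8, mul_assoc, GStar8_mul_Omega8', G0123_mul_Omega8']

theorem mul_Omega8'_eq_of_mul_eq {u x y : CliffordAlgebra Q8} (hu : u * Omega8' = Omega8')
    (h : x * u = y) : x * Omega8' = y * Omega8' :=
  calc x * Omega8' = x * (u * Omega8') := by rw [hu]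
    _ = y * Omega8' := by rw [← mul_assoc, h]

noncomputable def pairCombination (c₀₁ c₀₂ c₀₃ c₄₅ c₄₆ c₄₇ : ℝ) (m : Fin 8 → Fin 8 → ℝ) :
    CliffordAlgebra Q8 :=
  c₀₁ • (G8 0 * G8 1 * Omega8') + c₀₂ • (G8 0 * G8 2 * Omega8') +
    c₀₃ • (G8 0 * G8 3 * Omega8') + c₄₅ • (G8 4 * G8 5 * Omega8') +
    c₄₆ • (G8 4 * G8 6 * Omega8') + c₄₇ • (G8 4 * G8 7 * Omega8') +
    ∑ a with a.val < 4, ∑ b with 4 ≤ b.val, m a b • (G8 a * G8 b * Omega8')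

theorem X8_mul_Omega8'_eq (F : Fin 8 → Fin 8 → ℝ) (hF : ∀ a b, F a b = -F b a) :
    X8 F * Omega8' = (2 : ℝ) • pairCombination (F 0 1 + F 3 2) (F 0 2 + F 1 3) (F 0 3 + F 2 1)
      (F 4 5 + F 7 6) (F 4 6 + F 5 7) (F 4 7 + F 6 5) F := by
  have hdiag (a : Fin 8) : F a a = 0 := by linarith [hF a a]
  have hlt {a b : Fin 8} (_ : b < a) : F a b = -F b a := hF a b
  have h23 : G8 2 * G8 3 * Omega8' = -(G8 0 * G8 1) * Omega8' :=
    mul_Omega8'_eq_of_mul_eq G0123_mul_Omega8' (by simp [mul_assoc])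
  have h13 : G8 1 * G8 3 * Omega8' = G8 0 * G8 2 * Omega8' :=
    mul_Omega8'_eq_of_mul_eq G0123_mul_Omega8' (by simp [mul_assoc])
  have h12 : G8 1 * G8 2 * Omega8' = -(G8 0 * G8 3) * Omega8' :=
    mul_Omega8'_eq_of_mul_eq G0123_mul_Omega8' (by simp [mul_assoc])
  have h67 : G8 6 * G8 7 * Omega8' = -(G8 4 * G8 5) * Omega8' :=
    mul_Omega8'_eq_of_mul_eq G4567_mul_Omega8' (by simp [mul_assoc])
  have h57 : G8 5 * G8 7 * Omega8' = G8 4 * G8 6 * Omega8' :=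
    mul_Omega8'_eq_of_mul_eq G4567_mul_Omega8' (by simp [mul_assoc])
  have h56 : G8 5 * G8 6 * Omega8' = -(G8 4 * G8 7) * Omega8' :=
    mul_Omega8'_eq_of_mul_eq G4567_mul_Omega8' (by simp [mul_assoc])
  simp (disch := decide) only [X8, pairCombination, smul_mul_assoc,
    Finset.sum_filter, Fin.sum_univ_eight, hdiag, hlt, G8_mul_G8_of_lt, G8_mul_self, neg_mul,
    one_mul, zero_smul, add_mul, zero_mul, if_pos, if_neg, h23, h13, h12, h67, h57, h56]
  module

theorem contractLeft_proj_G8_mul (j a : Fin 8) (x : CliffordAlgebra Q8) :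
    contractLeft (LinearMap.proj j) (G8 a * x) =
      (if j = a then x else 0) - G8 a * contractLeft (LinearMap.proj j) x := by
  rw [G8, contractLeft_ι_mul]
  simp [Pi.single_apply]

theorem contractLeft_proj_G8 (j a : Fin 8) :
    contractLeft (LinearMap.proj j) (G8 a) = if j = a then 1 else 0 := by
  rw [G8, contractLeft_ι]
  simp [Pi.single_apply]

noncomputable def contractAlong (l : List (Fin 8)) : Module.End ℝ (CliffordAlgebra Q8) :=
  (l.map fun j => contractLeft (LinearMap.proj j)).prod

theorem contractAlong_nil (x : CliffordAlgebra Q8) : contractAlong [] x = x := rfl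

theorem contractAlong_cons (j : Fin 8) (l : List (Fin 8)) (x : CliffordAlgebra Q8) :
    contractAlong (j :: l) x = contractLeft (LinearMap.proj j) (contractAlong l x) := by
  simp [contractAlong]

set_option maxHeartbeats 1000000 in
theorem pairCombination_eq_zero_iff {c₀₁ c₀₂ c₀₃ c₄₅ c₄₆ c₄₇ : ℝ} {m : Fin 8 → Fin 8 → ℝ} :
    pairCombination c₀₁ c₀₂ c₀₃ c₄₅ c₄₆ c₄₇ m = 0 ↔
      c₀₁ = 0 ∧ c₀₂ = 0 ∧ c₀₃ = 0 ∧ c₄₅ = 0 ∧ c₄₆ = 0 ∧ c₄₇ = 0 ∧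
        ∀ a b : Fin 8, a.val < 4 → 4 ≤ b.val → m a b = 0 := by
  refine ⟨fun h => ?_, ?_⟩
  · rw [pairCombination, Omega8'_eq_sum, GStar8] at h
    simp (disch := decide) only [mul_add, mul_smul_comm, mul_one, mul_assoc, G8_mul_G8_mul_self,
      G8_mul_G8_mul_of_lt, G8_mul_self, G8_mul_G8_of_lt, mul_neg, neg_neg, Finset.sum_filter,
      Fin.sum_univ_eight, if_pos, if_neg, add_zero, zero_add] at h
    have hcoeff (a b : Fin 8) :=
      congrArg (contractAlong ([0, 1, 2, 3, 4, 5, 6, 7].filter fun j => j ≠ a ∧ j ≠ b)) h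
    refine ⟨?_, ?_, ?_, ?_, ?_, ?_, fun a b ha hb => ?_⟩
    on_goal 1 => have := hcoeff 0 1
    on_goal 2 => have := hcoeff 0 2
    on_goal 3 => have := hcoeff 0 3
    on_goal 4 => have := hcoeff 4 5
    on_goal 5 => have := hcoeff 4 6
    on_goal 6 => have := hcoeff 4 7
    on_goal 7 =>
      have := hcoeff a b
      fin_cases a <;> fin_cases b <;> try simp at ha hb
    all_goals
      simp (disch := decide) only [List.filter_cons, List.filter_nil, if_pos, if_neg] at this
      simp only [contractAlong_cons, contractAlong_nil, map_add, map_neg, map_smul, map_zero,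
        contractLeft_proj_G8_mul, contractLeft_proj_G8, contractLeft_one, Fin.isValue,
        Fin.reduceEq, ↓reduceIte, sub_zero, zero_sub, neg_zero, mul_zero, smul_zero, add_zero,
        zero_add, neg_neg] at this
      simpa using this
  · rintro ⟨rfl, rfl, rfl, rfl, rfl, rfl, hm⟩
    simp only [pairCombination, zero_smul, zero_add]
    exact Finset.sum_eq_zero fun a ha => Finset.sum_eq_zero fun b hb => by
      rw [hm a b (Finset.mem_filter.1 ha).2 (Finset.mem_filter.1 hb).2, zero_smul]

/-- BPS equations in eight Euclidean dimensions (`ν = 4/16`): `Ω₁₂₃₄` is an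
idempotent, and for antisymmetric `F` one has `X_F·Ω₁₂₃₄ = 0` iff
`F₁₂+F₄₃ = 0`, `F₁₃+F₂₄ = 0`, `F₁₄+F₃₂ = 0`, `F₅₆+F₈₇ = 0`, `F₅₇+F₆₈ = 0`,
`F₅₈+F₇₆ = 0`, and `F_{ab} = 0` for `a ∈ {1,2,3,4}`, `b ∈ {5,6,7,8}`
(indices shifted down by one since `Fin 8` starts at `0`). -/
theorem bps_eight_dimensions_four_sixteenth :
    Omega8' * Omega8' = Omega8' ∧
    ∀ F : Fin 8 → Fin 8 → ℝ, (∀ a b, F a b = -F b a) →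
      (X8 F * Omega8' = 0 ↔
        (F 0 1 + F 3 2 = 0 ∧
         F 0 2 + F 1 3 = 0 ∧
         F 0 3 + F 2 1 = 0 ∧
         F 4 5 + F 7 6 = 0 ∧
         F 4 6 + F 5 7 = 0 ∧
         F 4 7 + F 6 5 = 0 ∧
         (∀ a b : Fin 8, a.val < 4 → 4 ≤ b.val → F a b = 0))) := by
  refine ⟨isIdempotentElem_Omega8', fun F hF => ?_⟩
  rw [X8_mul_Omega8'_eq F hF, smul_eq_zero, pairCombination_eq_zero_iff]
  norm_num
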